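/- arXiv:2108.06635 — 3 statements merged into one kernel-verified Lean document; each statement's English description precedes it below -/
import Mathlib

section
/- Let A be a real symmetric n×n matrix and B a principal submatrix of A of size (n-1)×(n-1). Then the eigenvalues of B interlace those of A: if μ_1 ≤ ... ≤ μ_{n-1} are the eigenvalues of B and λ_1 ≤ ... ≤ λ_n those of A, then λ_i ≤ μ_i ≤ λ_{i+1} for all 1 ≤ i ≤ n-1. -/
/-!
Courant–Fischer by dimension count. Extending vectors of `ℝⁿ` by zero at `i0` is an isometry
`V : ℝⁿ → ℝⁿ⁺¹` with `⟪A (V y), V y⟫ = ⟪B y, y⟫`. For `lam i ≤ mu i`: the image under `V` of the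
span of the eigenvectors of `B` for `mu 0, …, mu i` (dimension `i + 1`) and the span of the
eigenvectors of `A` for `lam i, …, lam n` (dimension `n + 1 - i`) meet in a nonzero vector `V y`,
whence `lam i ‖y‖² ≤ ⟪A (V y), V y⟫ = ⟪B y, y⟫ ≤ mu i ‖y‖²`. The bound `mu i ≤ lam (i + 1)` is
the same argument for `-A` and `-B`.
-/

open Module Submodule
open scoped RealInnerProductSpace

theorem Submodule.exists_mem_inf_ne_zero_of_finrank_lt {K V : Type*} [DivisionRing K]
    [AddCommGroup V] [Module K V] [FiniteDimensional K V] {S U : Submodule K V}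
    (h : finrank K V < finrank K S + finrank K U) : ∃ x ∈ S, x ∈ U ∧ x ≠ 0 := by
  by_contra! hSU
  exact h.not_ge (finrank_add_finrank_le_of_disjoint (disjoint_def.mpr hSU))

theorem LinearIndependent.finrank_span_image {ι K M : Type*} [DivisionRing K] [AddCommGroup M]
    [Module K M] {v : ι → M} (hv : LinearIndependent K v) (s : Finset ι) :
    finrank K (span K (v '' s)) = s.card := by
  rw [Set.image_eq_range]
  exact (finrank_span_eq_card (hv.comp _ Subtype.val_injective)).trans (Fintype.card_coe s)

theorem LinearMap.exists_ne_zero_mem_span_image_map_mem_span_image {ι κ K E F : Type*}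
    [Field K] [AddCommGroup E] [Module K E] [FiniteDimensional K E] [AddCommGroup F] [Module K F]
    {V : F →ₗ[K] E} (hV : Function.Injective V) {v : κ → F} (hv : LinearIndependent K v)
    {w : ι → E} (hw : LinearIndependent K w) {s : Finset κ} {t : Finset ι}
    (hcard : finrank K E < s.card + t.card) :
    ∃ y ≠ 0, y ∈ span K (v '' s) ∧ V y ∈ span K (w '' t) := by
  have hVv : span K ((V ∘ v) '' s) = (span K (v '' s)).map V := by
    rw [map_span, Set.image_comp]
  obtain ⟨x, hxs, hxt, hx0⟩ := exists_mem_inf_ne_zero_of_finrank_lt (S := span K ((V ∘ v) '' s))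
    (U := span K (w '' t)) (by
      rwa [(hv.map' V (LinearMap.ker_eq_bot.mpr hV)).finrank_span_image, hw.finrank_span_image])
  rw [hVv] at hxs
  obtain ⟨y, hy, rfl⟩ := mem_map.mp hxs
  exact ⟨y, by rintro rfl; simp at hx0, hy, hxt⟩

theorem LinearMap.IsSymmetric.neg {𝕜 E : Type*} [RCLike 𝕜] [NormedAddCommGroup E]
    [InnerProductSpace 𝕜 E] {T : E →ₗ[𝕜] E} (hT : T.IsSymmetric) : (-T).IsSymmetric :=
  fun x y => by simp [hT x y]

section Rayleigh

variable {ι E : Type*} [NormedAddCommGroup E] [InnerProductSpace ℝ E]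

theorem Orthonormal.inner_eq_zero_of_mem_span_image {v : ι → E} (hv : Orthonormal ℝ v)
    {s : Set ι} {x : E} (hx : x ∈ span ℝ (v '' s)) {j : ι} (hj : j ∉ s) : ⟪v j, x⟫ = 0 := by
  refine mem_orthogonal_singleton_iff_inner_right.mp (span_le.mpr ?_ hx)
  rintro _ ⟨k, hk, rfl⟩
  exact mem_orthogonal_singleton_iff_inner_right.mpr (hv.inner_eq_zero (by rintro rfl; exact hj hk))

variable [Fintype ι] {T : E →ₗ[ℝ] E} {b : OrthonormalBasis ι ℝ E} {α : ι → ℝ}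

theorem LinearMap.IsSymmetric.inner_apply_self_eq_sum (hT : T.IsSymmetric)
    (hb : ∀ j, T (b j) = α j • b j) (x : E) : ⟪T x, x⟫ = ∑ j, α j * ⟪b j, x⟫ ^ 2 := by
  rw [← b.sum_inner_mul_inner]
  refine Finset.sum_congr rfl fun j _ => ?_
  rw [hT, hb, real_inner_smul_right, real_inner_comm x]
  ring

theorem LinearMap.IsSymmetric.inner_apply_self_le_of_mem_span (hT : T.IsSymmetric)
    (hb : ∀ j, T (b j) = α j • b j) {s : Set ι} {c : ℝ} (hα : ∀ j ∈ s, α j ≤ c) {x : E}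
    (hx : x ∈ span ℝ (b '' s)) : ⟪T x, x⟫ ≤ c * ‖x‖ ^ 2 := by
  rw [hT.inner_apply_self_eq_sum hb, ← real_inner_self_eq_norm_sq, ← b.sum_inner_mul_inner,
    Finset.mul_sum]
  refine Finset.sum_le_sum fun j _ => ?_
  rw [real_inner_comm (b j) x, ← sq]
  by_cases hj : j ∈ s
  · exact mul_le_mul_of_nonneg_right (hα j hj) (sq_nonneg _)
  · simp [b.orthonormal.inner_eq_zero_of_mem_span_image hx hj]

theorem LinearMap.IsSymmetric.le_inner_apply_self_of_mem_span (hT : T.IsSymmetric)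
    (hb : ∀ j, T (b j) = α j • b j) {s : Set ι} {c : ℝ} (hα : ∀ j ∈ s, c ≤ α j) {x : E}
    (hx : x ∈ span ℝ (b '' s)) : c * ‖x‖ ^ 2 ≤ ⟪T x, x⟫ := by
  have := hT.neg.inner_apply_self_le_of_mem_span (α := -α) (c := -c)
    (fun j => by simp [hb]) (fun j hj => neg_le_neg (hα j hj)) hx
  simpa using this

end Rayleigh

section Compression

variable {ι κ E F : Type*} [Fintype ι] [Fintype κ]
  [NormedAddCommGroup E] [InnerProductSpace ℝ E] [FiniteDimensional ℝ E]
  [NormedAddCommGroup F] [InnerProductSpace ℝ F]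
  {T : E →ₗ[ℝ] E} {S : F →ₗ[ℝ] F} {bT : OrthonormalBasis ι ℝ E} {bS : OrthonormalBasis κ ℝ F}
  {α : ι → ℝ} {β : κ → ℝ} {V : F →ₗᵢ[ℝ] E}

theorem LinearMap.IsSymmetric.le_of_compression (hT : T.IsSymmetric)
    (hbT : ∀ j, T (bT j) = α j • bT j) (hS : S.IsSymmetric) (hbS : ∀ j, S (bS j) = β j • bS j)
    (hV : ∀ y, ⟪T (V y), V y⟫ = ⟪S y, y⟫) {t : Finset ι} {s : Finset κ}
    (hcard : finrank ℝ E < s.card + t.card) {c d : ℝ} (hc : ∀ j ∈ t, c ≤ α j)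
    (hd : ∀ j ∈ s, β j ≤ d) : c ≤ d := by
  obtain ⟨y, hy0, hys, hyt⟩ := V.toLinearMap.exists_ne_zero_mem_span_image_map_mem_span_image
    V.injective bS.toBasis.linearIndependent bT.toBasis.linearIndependent hcard
  have hy : 0 < ‖y‖ ^ 2 := by positivity
  refine le_of_mul_le_mul_right ?_ hy
  calc c * ‖y‖ ^ 2 = c * ‖V y‖ ^ 2 := by rw [V.norm_map]
    _ ≤ ⟪T (V y), V y⟫ := hT.le_inner_apply_self_of_mem_span hbT hc hyt
    _ = ⟪S y, y⟫ := hV y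
    _ ≤ d * ‖y‖ ^ 2 := hS.inner_apply_self_le_of_mem_span hbS hd hys

theorem LinearMap.IsSymmetric.interlace_of_compression {n : ℕ} {T : E →ₗ[ℝ] E} {S : F →ₗ[ℝ] F}
    {bT : OrthonormalBasis (Fin (n + 1)) ℝ E} {bS : OrthonormalBasis (Fin n) ℝ F}
    {α : Fin (n + 1) → ℝ} {β : Fin n → ℝ} (hT : T.IsSymmetric) (hbT : ∀ j, T (bT j) = α j • bT j)
    (hS : S.IsSymmetric) (hbS : ∀ j, S (bS j) = β j • bS j)
    (hV : ∀ y, ⟪T (V y), V y⟫ = ⟪S y, y⟫) (hα : Monotone α) (hβ : Monotone β) (i : Fin n) :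
    α i.castSucc ≤ β i ∧ β i ≤ α i.succ := by
  have hE : finrank ℝ E = n + 1 := by simp [finrank_eq_card_basis bT.toBasis]
  constructor
  · refine hT.le_of_compression hbT hS hbS hV (t := .Ici i.castSucc) (s := .Iic i) ?_
      (fun j hj => hα (Finset.mem_Ici.mp hj)) (fun j hj => hβ (Finset.mem_Iic.mp hj))
    simp only [hE, Fin.card_Ici, Fin.card_Iic, Fin.val_castSucc]
    omega
  · refine neg_le_neg_iff.mp <| hT.neg.le_of_compression (bT := bT) (bS := bS) (V := V)
      (α := -α) (fun j => by simp [hbT]) hS.neg (β := -β) (fun j => by simp [hbS])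
      (fun y => by simp [hV]) (t := .Iic i.succ) (s := .Ici i) ?_
      (fun j hj => neg_le_neg (hα (Finset.mem_Iic.mp hj)))
      (fun j hj => neg_le_neg (hβ (Finset.mem_Ici.mp hj)))
    simp only [hE, Fin.card_Ici, Fin.card_Iic, Fin.val_succ]
    omega

end Compression

namespace Matrix

variable {m n : Type*} [Fintype n] [DecidableEq n]

theorem transpose_one_submatrix_mul_mul {R : Type*} [NonAssocSemiring R] (A : Matrix n n R)
    (e : m → n) :
    ((1 : Matrix n n R).submatrix id e)ᵀ * A * (1 : Matrix n n R).submatrix id e =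
      A.submatrix e e := by
  ext a b
  simp [mul_apply, one_apply]

theorem inner_toEuclideanLin_one_submatrix [Fintype m] [DecidableEq m] (A : Matrix n n ℝ)
    (e : m → n) (y : EuclideanSpace ℝ m) :
    ⟪toEuclideanLin A (toEuclideanLin ((1 : Matrix n n ℝ).submatrix id e) y),
      toEuclideanLin ((1 : Matrix n n ℝ).submatrix id e) y⟫ =
      ⟪toEuclideanLin (A.submatrix e e) y, y⟫ := by
  rw [← LinearMap.adjoint_inner_left, ← toEuclideanLin_conjTranspose_eq_adjoint,
    conjTranspose_eq_transpose_of_trivial, ← transpose_one_submatrix_mul_mul A e]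
  simp [toLpLin_apply, mulVec_mulVec, Matrix.mul_assoc]

theorem IsHermitian.exists_orthonormalBasis_toEuclideanLin_eq {A : Matrix n n ℝ}
    (hA : A.IsHermitian) {lam : n → ℝ} (h : ∃ σ : Equiv.Perm n, lam = hA.eigenvalues ∘ σ) :
    ∃ b : OrthonormalBasis n ℝ (EuclideanSpace ℝ n), ∀ j, toEuclideanLin A (b j) = lam j • b j := by
  obtain ⟨σ, rfl⟩ := h
  refine ⟨hA.eigenvectorBasis.reindex σ.symm, fun j => ?_⟩
  ext i
  simpa [toLpLin_apply] using congrFun (hA.mulVec_eigenvectorBasis (σ j)) i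

end Matrix

noncomputable def EuclideanSpace.extendByZero {m n : Type*} [Fintype m] [Fintype n]
    [DecidableEq m] [DecidableEq n] {e : m → n} (he : Function.Injective e) :
    EuclideanSpace ℝ m →ₗᵢ[ℝ] EuclideanSpace ℝ n where
  toLinearMap := Matrix.toEuclideanLin ((1 : Matrix n n ℝ).submatrix id e)
  norm_map' y := by
    have := Matrix.inner_toEuclideanLin_one_submatrix 1 e y
    rw [Matrix.submatrix_one e he] at this
    simpa [real_inner_self_eq_norm_sq] using this

theorem stmt_2 {n : ℕ} (A : Matrix (Fin (n+1)) (Fin (n+1)) ℝ) (hA : A.IsHermitian)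
    (i0 : Fin (n+1)) (hB : (A.submatrix i0.succAbove i0.succAbove).IsHermitian)
    (lam : Fin (n+1) → ℝ) (mu : Fin n → ℝ)
    (hlam_mono : Monotone lam) (hmu_mono : Monotone mu)
    (hlam : ∃ σ : Equiv.Perm (Fin (n+1)), lam = hA.eigenvalues ∘ σ)
    (hmu : ∃ σ : Equiv.Perm (Fin n), mu = hB.eigenvalues ∘ σ) :
    ∀ i : Fin n, lam i.castSucc ≤ mu i ∧ mu i ≤ lam i.succ := by
  obtain ⟨bA, hbA⟩ := hA.exists_orthonormalBasis_toEuclideanLin_eq hlam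
  obtain ⟨bB, hbB⟩ := hB.exists_orthonormalBasis_toEuclideanLin_eq hmu
  exact (Matrix.isSymmetric_toEuclideanLin_iff.mpr hA).interlace_of_compression
    (V := EuclideanSpace.extendByZero i0.succAbove_right_injective) hbA
    (Matrix.isSymmetric_toEuclideanLin_iff.mpr hB) hbB
    (Matrix.inner_toEuclideanLin_one_submatrix A i0.succAbove) hlam_mono hmu_mono
end

section
/- Let F ∈ ℝ[x,y]_d and suppose l_1, ..., l_r are pairwise non-proportional real linear forms with r ≤ d such that the product l_1 ⋯ l_r lies in the apolar ideal (F)^⊥. Then there exist real constants c_1, ..., c_r such that F = Σ_{i=1}^r c_i (l_i)_⊥^d, where (ax+by)_⊥ := bx - ay. -/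
open MvPolynomial

/-- The differential operator `∂(f)` applied to `F`: substitute `∂/∂x, ∂/∂y` for the
variables of `f` and act on `F`.  `f ∈ (F)^⊥` iff `diffOp f F = 0`. -/
noncomputable def diffOp {k : Type*} [CommSemiring k]
    (f F : MvPolynomial (Fin 2) k) : MvPolynomial (Fin 2) k :=
  ∑ m ∈ f.support, f.coeff m •
    ((⇑(pderiv (R := k) (0 : Fin 2)))^[m 0] ((⇑(pderiv (R := k) (1 : Fin 2)))^[m 1] F))


/-- The binary linear form `p.1 * x + p.2 * y`. -/
noncomputable def lin (p : ℝ × ℝ) : MvPolynomial (Fin 2) ℝ :=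
  C p.1 * X 0 + C p.2 * X 1

/-- For `l = a x + b y`, the form `l_⊥ = b x - a y`. -/
noncomputable def lperp (p : ℝ × ℝ) : MvPolynomial (Fin 2) ℝ :=
  C p.2 * X 0 - C p.1 * X 1

/-!
Induction on `r`. Applying `∂(l₁)` to `F` gives a form of degree `d - 1` annihilated by
`∂(l₂ ⋯ lᵣ)`, hence a combination of the `(lᵢ)_⊥^(d-1)`, `i ≥ 2`. Writing `lᵢ = aᵢx + bᵢy`,
`∂(l₁) (lᵢ)_⊥^d = d (a₁bᵢ - b₁aᵢ) (lᵢ)_⊥^(d-1)` with `a₁bᵢ - b₁aᵢ ≠ 0`, so some combination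
`P` of the `(lᵢ)_⊥^d`, `i ≥ 2`, has `∂(l₁) P = ∂(l₁) F`. It remains to see that the kernel of
`∂(l₁)` on forms of degree `d` is spanned by `(l₁)_⊥^d`: by induction on `d`, both partial
derivatives of such a form `G` are multiples of `(l₁)_⊥^(d-1)` with coefficient vector
orthogonal to `l₁`, and Euler's identity `x ∂ₓG + y ∂ᵧG = d G` reassembles them into a
multiple of `(l₁)_⊥^d`.
-/

namespace MvPolynomial

variable {σ k : Type*} [CommSemiring k]

theorem pderiv_pderiv_comm (i j : σ) (F : MvPolynomial σ k) :
    pderiv i (pderiv j F) = pderiv j (pderiv i F) := by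
  classical
  induction F using MvPolynomial.induction_on with
  | C a => simp
  | add p q hp hq => simp [hp, hq]
  | mul_X p n hp =>
    simp only [Derivation.leibniz, pderiv_X, hp, map_add, smul_eq_mul, Pi.single_apply]
    split_ifs <;> simp <;> ring

theorem commute_pderiv (i j : σ) :
    Commute (pderiv (R := k) i).toLinearMap (pderiv j).toLinearMap :=
  LinearMap.ext fun F => pderiv_pderiv_comm i j F

end MvPolynomial

section

variable {k : Type*} [CommSemiring k]

noncomputable def monomialDeriv :
    Multiplicative (Fin 2 →₀ ℕ) →* Module.End k (MvPolynomial (Fin 2) k) where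
  toFun m := (pderiv 0).toLinearMap ^ (m.toAdd 0) * (pderiv 1).toLinearMap ^ (m.toAdd 1)
  map_one' := by simp
  map_mul' m n := by
    simp only [toAdd_mul, Finsupp.add_apply, pow_add]
    exact ((commute_pderiv 0 1).pow_pow (n.toAdd 0) (m.toAdd 1)).mul_mul_mul_comm _ _

noncomputable def diffOpAlgHom :
    MvPolynomial (Fin 2) k →ₐ[k] Module.End k (MvPolynomial (Fin 2) k) :=
  AddMonoidAlgebra.lift k _ _ monomialDeriv

theorem diffOpAlgHom_apply (f F : MvPolynomial (Fin 2) k) : diffOpAlgHom f F = diffOp f F := by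
  rw [diffOpAlgHom, AddMonoidAlgebra.lift_apply, diffOp, Finsupp.sum, LinearMap.sum_apply]
  refine Finset.sum_congr rfl fun m _ => ?_
  simp only [monomialDeriv, MonoidHom.coe_mk, OneHom.coe_mk, toAdd_ofAdd, LinearMap.smul_apply,
    Module.End.mul_apply, Module.End.pow_apply, Derivation.coeFn_coe]
  rfl

theorem diffOp_mul (f g F : MvPolynomial (Fin 2) k) :
    diffOp (f * g) F = diffOp f (diffOp g F) := by
  simp only [← diffOpAlgHom_apply, map_mul, Module.End.mul_apply]

theorem diffOp_one (F : MvPolynomial (Fin 2) k) : diffOp 1 F = F := by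
  simp only [← diffOpAlgHom_apply, map_one, Module.End.one_apply]

theorem diffOp_X (i : Fin 2) (F : MvPolynomial (Fin 2) k) : diffOp (X i) F = pderiv i F := by
  rw [← diffOpAlgHom_apply, diffOpAlgHom, X, ← single_eq_monomial, AddMonoidAlgebra.lift_single]
  fin_cases i <;> simp [monomialDeriv]

theorem diffOp_add (f g F : MvPolynomial (Fin 2) k) :
    diffOp (f + g) F = diffOp f F + diffOp g F := by
  simp only [← diffOpAlgHom_apply, map_add, LinearMap.add_apply]

theorem diffOp_C_mul (a : k) (f F : MvPolynomial (Fin 2) k) :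
    diffOp (C a * f) F = C a * diffOp f F := by
  simp only [← diffOpAlgHom_apply, ← smul_eq_C_mul, map_smul, LinearMap.smul_apply]

theorem diffOp_pderiv (f F : MvPolynomial (Fin 2) k) (i : Fin 2) :
    diffOp f (pderiv i F) = pderiv i (diffOp f F) := by
  rw [← diffOp_X, ← diffOp_X, ← diffOp_mul, ← diffOp_mul, mul_comm]

end

theorem diffOp_sub {k : Type*} [CommRing k] (f F G : MvPolynomial (Fin 2) k) :
    diffOp f (F - G) = diffOp f F - diffOp f G := by
  simp only [← diffOpAlgHom_apply, map_sub]

theorem diffOp_lin (p : ℝ × ℝ) (F : MvPolynomial (Fin 2) ℝ) :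
    diffOp (lin p) F = C p.1 * pderiv 0 F + C p.2 * pderiv 1 F := by
  rw [lin, diffOp_add, diffOp_C_mul, diffOp_C_mul, diffOp_X, diffOp_X]

theorem isHomogeneous_diffOp_lin {d : ℕ} {F : MvPolynomial (Fin 2) ℝ} (hF : F.IsHomogeneous d)
    (p : ℝ × ℝ) : (diffOp (lin p) F).IsHomogeneous (d - 1) := by
  rw [diffOp_lin]
  exact (hF.pderiv.C_mul _).add (hF.pderiv.C_mul _)

theorem isHomogeneous_lperp_pow (p : ℝ × ℝ) (n : ℕ) : (lperp p ^ n).IsHomogeneous n := by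
  have h : (lperp p).IsHomogeneous 1 :=
    ((isHomogeneous_X ℝ 0).C_mul _).sub ((isHomogeneous_X ℝ 1).C_mul _)
  simpa using h.pow n

theorem lperp_ne_zero {p : ℝ × ℝ} (hp : p ≠ 0) : lperp p ≠ 0 := by
  intro h
  have h0 := congrArg (eval ![1, 0]) h
  have h1 := congrArg (eval ![0, 1]) h
  simp [lperp] at h0 h1
  exact hp (Prod.ext h1 h0)

theorem diffOp_lin_lperp_pow (p q : ℝ × ℝ) (n : ℕ) :
    diffOp (lin p) (lperp q ^ n) = C (n * (p.1 * q.2 - p.2 * q.1)) * lperp q ^ (n - 1) := by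
  rw [diffOp_lin, pderiv_pow, pderiv_pow, lperp]
  simp only [map_sub, pderiv_C_mul, pderiv_X_self, pderiv_X_of_ne zero_ne_one,
    pderiv_X_of_ne one_ne_zero, map_mul, map_natCast, mul_zero, mul_one, sub_zero, zero_sub]
  ring

theorem exists_lin_eq_C_mul_lperp {p q : ℝ × ℝ} (hp : p ≠ 0)
    (horth : p.1 * q.1 + p.2 * q.2 = 0) : ∃ t : ℝ, lin q = C t * lperp p := by
  obtain ⟨t, h₁, h₂⟩ : ∃ t, q.1 = t * p.2 ∧ q.2 = -(t * p.1) := by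
    rcases eq_or_ne p.1 0 with h | h
    · have hp₂ : p.2 ≠ 0 := fun h' => hp (Prod.ext h h')
      refine ⟨q.1 / p.2, by field_simp, ?_⟩
      rw [h, zero_mul, zero_add, mul_eq_zero, or_iff_right hp₂] at horth
      simp [h, horth]
    · refine ⟨-(q.2 / p.1), ?_, by field_simp⟩
      field_simp
      linarith
  refine ⟨t, ?_⟩
  rw [lin, lperp, h₁, h₂]
  simp only [map_mul, map_neg]
  ring

theorem eq_C_mul_lperp_pow_of_diffOp_lin_eq_zero {p : ℝ × ℝ} (hp : p ≠ 0) {d : ℕ}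
    {G : MvPolynomial (Fin 2) ℝ} (hG : G.IsHomogeneous d) (hker : diffOp (lin p) G = 0) :
    ∃ c : ℝ, G = C c * lperp p ^ d := by
  induction d generalizing G with
  | zero =>
    rw [← totalDegree_zero_iff_isHomogeneous, totalDegree_eq_zero_iff_eq_C] at hG
    exact ⟨_, by rw [pow_zero, mul_one, hG]⟩
  | succ d ih =>
    have hder (i : Fin 2) : ∃ c : ℝ, pderiv i G = C c * lperp p ^ d :=
      ih hG.pderiv (by rw [diffOp_pderiv, hker, map_zero])
    obtain ⟨c₀, h₀⟩ := hder 0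
    obtain ⟨c₁, h₁⟩ := hder 1
    have horth : p.1 * c₀ + p.2 * c₁ = 0 := by
      have h : C (p.1 * c₀ + p.2 * c₁) * lperp p ^ d = 0 := by
        rw [← hker, diffOp_lin, h₀, h₁]; simp only [map_add, map_mul]; ring
      rwa [mul_eq_zero, C_eq_zero, or_iff_left (pow_ne_zero d (lperp_ne_zero hp))] at h
    obtain ⟨t, ht⟩ := exists_lin_eq_C_mul_lperp (q := (c₀, c₁)) hp horth
    have heuler : ((d + 1 : ℕ) : MvPolynomial (Fin 2) ℝ) * G = C t * lperp p ^ (d + 1) := by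
      rw [lin] at ht
      rw [← nsmul_eq_mul, ← hG.sum_X_mul_pderiv, Fin.sum_univ_two, h₀, h₁]
      linear_combination lperp p ^ d * ht
    refine ⟨t / (d + 1), ?_⟩
    have hd : ((d + 1 : ℕ) : ℝ) ≠ 0 := Nat.cast_ne_zero.mpr d.succ_ne_zero
    rw [← Nat.cast_add_one, div_eq_inv_mul, map_mul, mul_assoc, ← heuler, ← mul_assoc,
      ← map_natCast C, ← map_mul, inv_mul_cancel₀ hd, map_one, one_mul]

theorem exists_diffOp_lin_sum_eq {r d : ℕ} (p : ℝ × ℝ) (q : Fin r → ℝ × ℝ)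
    (hpq : ∀ i, p.1 * (q i).2 ≠ p.2 * (q i).1) (hd : d ≠ 0) (c : Fin r → ℝ) :
    ∃ e : Fin r → ℝ, diffOp (lin p) (∑ i, C (e i) * lperp (q i) ^ d)
      = ∑ i, C (c i) * lperp (q i) ^ (d - 1) := by
  refine ⟨fun i => c i / (d * (p.1 * (q i).2 - p.2 * (q i).1)), ?_⟩
  rw [← diffOpAlgHom_apply, map_sum]
  refine Finset.sum_congr rfl fun i _ => ?_
  rw [← smul_eq_C_mul, map_smul, diffOpAlgHom_apply, diffOp_lin_lperp_pow, smul_eq_C_mul,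
    ← mul_assoc, ← map_mul, div_mul_cancel₀]
  exact mul_ne_zero (Nat.cast_ne_zero.mpr hd) (sub_ne_zero.mpr (hpq i))

theorem stmt_7 {d r : ℕ} (F : MvPolynomial (Fin 2) ℝ) (hF : F.IsHomogeneous d)
    (l : Fin r → ℝ × ℝ) (hl : ∀ i, l i ≠ 0)
    (hdist : ∀ i j, i ≠ j → (l i).1 * (l j).2 ≠ (l i).2 * (l j).1)
    (hrd : r ≤ d)
    (hmem : diffOp (∏ i, lin (l i)) F = 0) :
    ∃ c : Fin r → ℝ, F = ∑ i, C (c i) * (lperp (l i)) ^ d := by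
  induction r generalizing d F with
  | zero => exact ⟨0, by simpa [diffOp_one] using hmem⟩
  | succ r ih =>
    have hH : diffOp (∏ i : Fin r, lin (l i.succ)) (diffOp (lin (l 0)) F) = 0 := by
      rwa [Fin.prod_univ_succ, mul_comm, diffOp_mul] at hmem
    obtain ⟨c, hc⟩ := ih _ (isHomogeneous_diffOp_lin hF (l 0)) (fun i => l i.succ)
      (fun i => hl i.succ) (fun i j hij => hdist _ _ (Fin.succ_injective _ |>.ne hij)) (by omega) hH
    obtain ⟨e, he⟩ := exists_diffOp_lin_sum_eq (d := d) (l 0) (fun i => l i.succ)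
      (fun i => hdist 0 i.succ (Fin.succ_ne_zero i).symm) (by omega) c
    obtain ⟨c₀, hc₀⟩ := eq_C_mul_lperp_pow_of_diffOp_lin_eq_zero (hl 0)
      (hF.sub (IsHomogeneous.sum _ _ _ fun i _ => (isHomogeneous_lperp_pow _ d).C_mul (e i)))
      (by rw [diffOp_sub, he, ← hc, sub_self])
    refine ⟨Fin.cons c₀ e, ?_⟩
    rw [Fin.sum_univ_succ]
    simp only [Fin.cons_zero, Fin.cons_succ]
    rw [← hc₀, sub_add_cancel]
end

section
/- For d ≥ 5, the almost real rank of the monomial x^{d-2}y² ∈ ℝ[x,y]_d equals d - 1 (the maximal possible value). -/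
open MvPolynomial

/-- A binary form `g` of degree `r` has almost real roots if it is nonzero, homogeneous of
degree `r`, and has at least `r - 2` simple, pairwise non-proportional real linear factors. -/
def HasAlmostRealRoots (r : ℕ) (g : MvPolynomial (Fin 2) ℝ) : Prop :=
  g ≠ 0 ∧ g.IsHomogeneous r ∧
  ∃ l : Fin (r - 2) → ℝ × ℝ, (∀ i, l i ≠ 0) ∧
    (∀ i j, i ≠ j → (l i).1 * (l j).2 ≠ (l i).2 * (l j).1) ∧
    (∏ i, lin (l i)) ∣ g ∧ (∀ i, ¬ (lin (l i)) ^ 2 ∣ g)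

/-- The almost real rank: least `r` such that `(F)^⊥` contains a degree-`r` form
with almost real roots. -/
noncomputable def arrank (F : MvPolynomial (Fin 2) ℝ) : ℕ :=
  sInf {r | ∃ g, HasAlmostRealRoots r g ∧ diffOp g F = 0}

/-- The minimal degree of a nonzero (homogeneous) element of the apolar ideal `(F)^⊥`;
this equals the complex Waring border rank of `F`. -/
noncomputable def minApolarDeg (F : MvPolynomial (Fin 2) ℝ) : ℕ :=
  sInf {r | ∃ g, g ≠ 0 ∧ MvPolynomial.IsHomogeneous g r ∧ diffOp g F = 0}

/-!
A form `g` is apolar to `x^a y^b` exactly when each of its monomials `x^i y^j` has `i > a` or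
`j > b`. If `g` has degree `r ≤ d - 2` and is apolar to `x^{d-2} y²`, every monomial of `g` has
`j ≥ 3`, so `y³ ∣ g`; in particular none of the simple real linear factors of `g` is a multiple
of `y`. Setting `y = 1` then leaves a polynomial of degree at most `r - 3` divisible by `r - 2`
linear factors, which is absurd.

Conversely, `(x² + c y²) ∏ (x - aᵢ y)` with `d - 3` distinct reals `aᵢ` summing to `0` and
`c = (∑ aᵢ²) / 2 > 0` has almost real roots, and the only monomials of degree `d - 1` it has to
avoid are `x^{d-2} y` and `x^{d-3} y²`. Their coefficients are `-e₁(a)` and `c + e₂(a)`, both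
zero because `2 e₂(a) = e₁(a)² - ∑ aᵢ²`.
-/

open Finset

namespace MvPolynomial

variable {σ R : Type*} [CommSemiring R]

theorem iterate_pderiv_monomial [DecidableEq σ] (i : σ) (s : σ →₀ ℕ) (r : R) (k : ℕ) :
    (⇑(pderiv i))^[k] (monomial s r)
      = monomial (s - Finsupp.single i k) (r * (s i).descFactorial k) := by
  induction k with
  | zero => simp
  | succ k ih =>
    rw [Function.iterate_succ_apply', ih, pderiv_monomial, tsub_tsub, ← Finsupp.single_add,
      Finsupp.tsub_apply, Finsupp.single_eq_same, Nat.descFactorial_succ, Nat.cast_mul, mul_assoc,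
      mul_comm ((s i - k : ℕ) : R)]

theorem X_pow_dvd_of_forall_le_apply {p : MvPolynomial σ R} {i : σ} {k : ℕ}
    (h : ∀ m ∈ p.support, k ≤ m i) : X i ^ k ∣ p := by
  rw [p.as_sum]
  refine Finset.dvd_sum fun m hm => ?_
  rw [X_pow_eq_monomial, monomial_dvd_monomial]
  exact ⟨Or.inr (Finsupp.single_le_iff.mpr (h m hm)), one_dvd _⟩

theorem IsHomogeneous.apply_zero_add_apply_one {p : MvPolynomial (Fin 2) R} {r : ℕ}
    (hp : p.IsHomogeneous r) {m : Fin 2 →₀ ℕ} (hm : m ∈ p.support) : m 0 + m 1 = r := by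
  rw [hp.degree_eq_sum_deg_support hm, Finset.sum_subset (subset_univ _)
    (fun i _ hi => Finsupp.notMem_support_iff.mp hi), Fin.sum_univ_two]

theorem iterate_pderiv_X_pow_mul_X_pow (a b i j : ℕ) :
    (⇑(pderiv (R := R) 0))^[i] ((⇑(pderiv (R := R) 1))^[j]
      (X 0 ^ a * X 1 ^ b : MvPolynomial (Fin 2) R))
      = monomial (Finsupp.single 0 (a - i) + Finsupp.single 1 (b - j))
          ((a.descFactorial i * b.descFactorial j : ℕ) : R) := by
  have hexp : Finsupp.single 0 a + Finsupp.single 1 b - Finsupp.single 1 j - Finsupp.single 0 i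
      = Finsupp.single (0 : Fin 2) (a - i) + Finsupp.single 1 (b - j) := by
    ext x
    fin_cases x <;> simp
  rw [X_pow_eq_monomial, X_pow_eq_monomial, monomial_mul, one_mul, iterate_pderiv_monomial,
    iterate_pderiv_monomial, hexp]
  simp [mul_comm]

theorem diffOp_X_pow_mul_X_pow_eq_zero_iff [NoZeroDivisors R] [CharZero R]
    {g : MvPolynomial (Fin 2) R} {a b : ℕ} :
    diffOp g (X 0 ^ a * X 1 ^ b) = 0 ↔ ∀ m ∈ g.support, a < m 0 ∨ b < m 1 := by
  simp only [diffOp, iterate_pderiv_X_pow_mul_X_pow, smul_monomial]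
  constructor
  · intro h m hm
    by_contra! hle
    have hc := congr_arg (coeff (Finsupp.single 0 (a - m 0) + Finsupp.single 1 (b - m 1))) h
    rw [coeff_sum, Finset.sum_eq_single m] at hc
    · simp only [smul_eq_mul, coeff_monomial, ↓reduceIte, coeff_zero, mul_eq_zero, Nat.cast_mul,
        Nat.cast_eq_zero, Nat.descFactorial_eq_zero_iff_lt] at hc
      exact hc.elim (mem_support_iff.1 hm) (by omega)
    · intro m' _ hne
      rw [coeff_monomial]
      split_ifs with heq
      · have h0 := congr_arg (· 0) heq
        have h1 := congr_arg (· 1) heq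
        simp only [Finsupp.add_apply, Finsupp.single_apply, ↓reduceIte, zero_ne_one, one_ne_zero,
          add_zero, zero_add] at h0 h1
        by_cases hle' : m' 0 ≤ a ∧ m' 1 ≤ b
        · exact absurd (Finsupp.ext (Fin.forall_fin_two.2 ⟨by omega, by omega⟩)) hne
        · simp only [smul_eq_mul, Nat.cast_mul, mul_eq_zero, Nat.cast_eq_zero,
            Nat.descFactorial_eq_zero_iff_lt]
          omega
      · rfl
    · exact fun hm' => absurd hm hm'
  · intro h
    refine Finset.sum_eq_zero fun m hm => ?_
    rcases h m hm with h0 | h1 <;> simp [Nat.descFactorial_eq_zero_iff_lt.mpr, *]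

noncomputable def dehomogenize : MvPolynomial (Fin 2) R →ₐ[R] Polynomial R :=
  aeval ![Polynomial.X, 1]

theorem dehomogenize_eq_sum (p : MvPolynomial (Fin 2) R) :
    dehomogenize p = ∑ m ∈ p.support, Polynomial.C (coeff m p) * Polynomial.X ^ m 0 := by
  conv_lhs => rw [p.as_sum]
  rw [map_sum]
  refine Finset.sum_congr rfl fun m _ => ?_
  rw [dehomogenize, aeval_monomial, Finsupp.prod_fintype _ _ (fun i => pow_zero _),
    Fin.prod_univ_two]
  simp [Polynomial.algebraMap_eq]

theorem IsHomogeneous.coeff_dehomogenize {p : MvPolynomial (Fin 2) R} {r : ℕ}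
    (hp : p.IsHomogeneous r) {m : Fin 2 →₀ ℕ} (hm : m 0 + m 1 = r) :
    (dehomogenize p).coeff (m 0) = coeff m p := by
  rw [dehomogenize_eq_sum, Polynomial.finsetSum_coeff]
  simp only [Polynomial.coeff_C_mul_X_pow]
  rw [Finset.sum_eq_single m]
  · exact if_pos rfl
  · intro m' hm' hne
    refine if_neg fun h0 => hne (Finsupp.ext (Fin.forall_fin_two.2 ⟨?_, ?_⟩))
    · exact h0.symm
    · have := hp.apply_zero_add_apply_one hm'
      omega
  · intro hm'
    rw [notMem_support_iff.mp hm', ite_self]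

theorem IsHomogeneous.dehomogenize_ne_zero {p : MvPolynomial (Fin 2) R} {r : ℕ}
    (hp : p.IsHomogeneous r) (h0 : p ≠ 0) : dehomogenize p ≠ 0 := by
  obtain ⟨m, hm⟩ := exists_coeff_ne_zero h0
  intro hz
  apply hm
  rw [← hp.coeff_dehomogenize (hp.apply_zero_add_apply_one (mem_support_iff.mpr hm)), hz,
    Polynomial.coeff_zero]

theorem IsHomogeneous.natDegree_dehomogenize_le {p : MvPolynomial (Fin 2) R} {r j : ℕ}
    (hp : p.IsHomogeneous r) (h : ∀ m ∈ p.support, j ≤ m 1) :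
    (dehomogenize p).natDegree ≤ r - j := by
  rw [dehomogenize_eq_sum]
  refine Polynomial.natDegree_sum_le_of_forall_le _ _ fun m hm => ?_
  have := hp.apply_zero_add_apply_one hm
  have := h m hm
  exact (Polynomial.natDegree_C_mul_X_pow_le _ _).trans (by omega)

end MvPolynomial

namespace Polynomial

variable {R : Type*} [CommRing R]

theorem coeff_prod_range_X_sub_C_self (a : ℕ → R) (n : ℕ) :
    (∏ i ∈ range n, (X - C (a i))).coeff n = 1 := by
  nontriviality R
  have hlead := (monic_prod_of_monic (range n) _ fun i _ => monic_X_sub_C (a i)).coeff_natDegree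
  rwa [natDegree_finsetProd_X_sub_C_eq_card, card_range] at hlead

theorem coeff_prod_range_succ_X_sub_C (a : ℕ → R) (n : ℕ) :
    (∏ i ∈ range (n + 1), (X - C (a i))).coeff n = -∑ i ∈ range (n + 1), a i := by
  simpa using prod_X_sub_C_coeff_card_pred (range (n + 1)) a (by simp)

theorem two_mul_coeff_prod_range_add_two_X_sub_C (a : ℕ → R) (n : ℕ) :
    2 * (∏ i ∈ range (n + 2), (X - C (a i))).coeff n
      = (∑ i ∈ range (n + 2), a i) ^ 2 - ∑ i ∈ range (n + 2), a i ^ 2 := by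
  induction n with
  | zero =>
    simp only [zero_add, prod_range_succ, range_one, prod_singleton, mul_coeff_zero, coeff_sub,
      coeff_X_zero, coeff_C_zero, zero_sub, mul_neg, neg_mul, neg_neg, sum_range_succ,
      sum_singleton]
    ring
  | succ n ih =>
    rw [prod_range_succ _ (n + 2), coeff_mul_X_sub_C, mul_sub, ih,
      coeff_prod_range_succ_X_sub_C a (n + 1), sum_range_succ _ (n + 2),
      sum_range_succ (fun i => a i ^ 2) (n + 2)]
    ring

theorem not_sq_X_sub_C_dvd_mul_prod_range [IsDomain R] {a : ℕ → R} (ha : Function.Injective a)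
    {q : R[X]} {n i : ℕ} (hi : i < n) (hq : ¬ q.IsRoot (a i)) :
    ¬ (X - C (a i)) ^ 2 ∣ q * ∏ j ∈ range n, (X - C (a j)) := by
  rw [← mul_prod_erase _ _ (mem_range.2 hi), mul_left_comm, pow_two,
    mul_dvd_mul_iff_left (X_sub_C_ne_zero _), dvd_iff_isRoot, IsRoot, eval_mul, eval_prod]
  refine mul_ne_zero hq (prod_ne_zero_iff.2 fun j hj => ?_)
  rw [eval_sub, eval_X, eval_C, sub_ne_zero]
  exact ha.ne (ne_of_mem_erase hj).symm

end Polynomial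

theorem dehomogenize_lin (p : ℝ × ℝ) :
    dehomogenize (lin p) = Polynomial.C p.1 * Polynomial.X + Polynomial.C p.2 := by
  simp [lin, dehomogenize, Polynomial.algebraMap_eq]

theorem isHomogeneous_lin (p : ℝ × ℝ) : (lin p).IsHomogeneous 1 :=
  (isHomogeneous_C_mul_X _ _).add (isHomogeneous_C_mul_X _ _)

theorem lt_of_hasAlmostRealRoots_of_diffOp_eq_zero {a b r : ℕ} (hb : 2 ≤ b)
    {g : MvPolynomial (Fin 2) ℝ} (hg : HasAlmostRealRoots r g)
    (hap : diffOp g (X 0 ^ a * X 1 ^ b) = 0) : a < r := by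
  obtain ⟨hg0, hhom, l, hl0, -, hdvd, hsq⟩ := hg
  by_contra! hra
  have hsupp : ∀ m ∈ g.support, b + 1 ≤ m 1 := fun m hm =>
    (diffOp_X_pow_mul_X_pow_eq_zero_iff.1 hap m hm).resolve_left
      (by have := hhom.apply_zero_add_apply_one hm; omega)
  have hbr : b + 1 ≤ r := by
    obtain ⟨m, hm⟩ := exists_coeff_ne_zero hg0
    have := hhom.apply_zero_add_apply_one (mem_support_iff.mpr hm)
    have := hsupp m (mem_support_iff.mpr hm)
    omega
  have hl : ∀ i, (l i).1 ≠ 0 := by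
    intro i h1
    have h2 : (l i).2 ≠ 0 := fun h2 => hl0 i (Prod.ext h1 h2)
    have hsq_eq : lin (l i) ^ 2 = C ((l i).2 ^ 2) * X 1 ^ 2 := by
      rw [lin, h1, C_0, zero_mul, zero_add, mul_pow, C_pow]
    apply hsq i
    rw [hsq_eq, ((isUnit_iff_ne_zero.2 (pow_ne_zero 2 h2)).map C).mul_left_dvd]
    exact X_pow_dvd_of_forall_le_apply fun m hm => by have := hsupp m hm; omega
  have hlin_ne : ∀ i, Polynomial.C (l i).1 * Polynomial.X + Polynomial.C (l i).2 ≠ 0 :=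
    fun i => Polynomial.ne_zero_of_natDegree_gt (n := 0)
      (by rw [Polynomial.natDegree_linear (hl i)]; exact one_pos)
  have hprod : (dehomogenize (∏ i, lin (l i))).natDegree = r - 2 := by
    simp_rw [map_prod, dehomogenize_lin]
    rw [Polynomial.natDegree_prod _ _ fun i _ => hlin_ne i]
    simp [Polynomial.natDegree_linear (hl _)]
  have hle := Polynomial.natDegree_le_of_dvd (map_dvd dehomogenize hdvd)
    (hhom.dehomogenize_ne_zero hg0)
  have hge := hhom.natDegree_dehomogenize_le hsupp
  omega

noncomputable def node (n i : ℕ) : ℝ := 2 * i + 1 - n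

theorem node_injective (n : ℕ) : Function.Injective (node n) := fun i j h => by
  have : (i : ℝ) = j := by unfold node at h; linarith
  exact_mod_cast this

theorem sum_range_node (n : ℕ) : ∑ i ∈ range n, node n i = 0 := by
  have hodd : ∀ k : ℕ, ∑ i ∈ range k, (2 * (i : ℝ) + 1) = k ^ 2 := by
    intro k
    induction k with
    | zero => simp
    | succ k ih =>
      rw [sum_range_succ, ih]
      push_cast
      ring
  simp only [node, sum_sub_distrib, hodd, sum_const, card_range, nsmul_eq_mul]
  ring

noncomputable def witnessConst (n : ℕ) : ℝ := (∑ i ∈ range n, node n i ^ 2) / 2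

theorem witnessConst_pos {n : ℕ} (hn : 2 ≤ n) : 0 < witnessConst n := by
  have hnode : node n 0 < 0 := by
    have : (2 : ℝ) ≤ n := by exact_mod_cast hn
    simp only [node, CharP.cast_eq_zero]
    linarith
  have := single_le_sum (fun i _ => sq_nonneg (node n i)) (mem_range.2 (by omega : 0 < n))
  unfold witnessConst
  nlinarith

noncomputable def witnessForm (n : ℕ) : MvPolynomial (Fin 2) ℝ :=
  (X 0 ^ 2 + C (witnessConst n) * X 1 ^ 2) * ∏ i : Fin n, lin (1, -node n i)

theorem dehomogenize_witnessForm (n : ℕ) :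
    dehomogenize (witnessForm n) = (Polynomial.X ^ 2 + Polynomial.C (witnessConst n)) *
      ∏ i ∈ range n, (Polynomial.X - Polynomial.C (node n i)) := by
  rw [witnessForm, map_mul, map_prod]
  simp_rw [dehomogenize_lin]
  rw [Fin.prod_univ_eq_prod_range (fun i => Polynomial.C 1 * Polynomial.X
    + Polynomial.C (-node n i))]
  simp [dehomogenize, Polynomial.algebraMap_eq, sub_eq_add_neg]

theorem isHomogeneous_witnessForm (n : ℕ) : (witnessForm n).IsHomogeneous (n + 2) := by
  rw [add_comm]
  refine ((isHomogeneous_X_pow _ 2).add (isHomogeneous_C_mul_X_pow _ _ 2)).mul ?_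
  simpa using
    IsHomogeneous.prod (univ : Finset (Fin n)) _ (fun _ => 1) fun i _ => isHomogeneous_lin _

theorem hasAlmostRealRoots_witnessForm {n : ℕ} (hn : 2 ≤ n) :
    HasAlmostRealRoots (n + 2) (witnessForm n) := by
  have hmonic : (dehomogenize (witnessForm n)).Monic := by
    rw [dehomogenize_witnessForm]
    exact (Polynomial.monic_X_pow_add_C _ two_ne_zero).mul
      (Polynomial.monic_prod_of_monic _ _ fun i _ => Polynomial.monic_X_sub_C _)
  refine ⟨fun h => hmonic.ne_zero (by rw [h, map_zero]), isHomogeneous_witnessForm n,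
    fun i => (1, -node n i), fun i h => one_ne_zero (congr_arg Prod.fst h),
    fun i j hij h => hij (Fin.ext (node_injective n (by simpa using h.symm))),
    Dvd.intro_left _ rfl, fun i hdvd => ?_⟩
  have hquad : ¬ (Polynomial.X ^ 2 + Polynomial.C (witnessConst n)).IsRoot (node n i) := by
    have := witnessConst_pos hn
    simp only [Polynomial.IsRoot, Polynomial.eval_add, Polynomial.eval_pow, Polynomial.eval_X,
      Polynomial.eval_C]
    positivity
  refine Polynomial.not_sq_X_sub_C_dvd_mul_prod_range (node_injective n) i.isLt hquad ?_
  simpa [dehomogenize_witnessForm, dehomogenize_lin, sub_eq_add_neg] using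
    map_dvd dehomogenize hdvd

theorem coeff_dehomogenize_witnessForm_eq_zero {n j : ℕ} (hn : 2 ≤ n) (hnj : n ≤ j)
    (hjn : j ≤ n + 1) : (dehomogenize (witnessForm n)).coeff j = 0 := by
  obtain ⟨k, rfl⟩ := Nat.exists_eq_add_of_le' hn
  set P := ∏ i ∈ range (k + 2), (Polynomial.X - Polynomial.C (node (k + 2) i)) with hP
  have hcoeff : ∀ i, (dehomogenize (witnessForm (k + 2))).coeff (i + 2)
      = P.coeff i + witnessConst (k + 2) * P.coeff (i + 2) := by
    intro i
    rw [dehomogenize_witnessForm, add_mul, Polynomial.coeff_add, Polynomial.coeff_X_pow_mul,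
      Polynomial.coeff_C_mul]
  obtain rfl | rfl : j = k + 2 ∨ j = k + 1 + 2 := by omega
  · have he₂ := Polynomial.two_mul_coeff_prod_range_add_two_X_sub_C (node (k + 2)) k
    rw [← hP, sum_range_node] at he₂
    rw [hcoeff, hP, Polynomial.coeff_prod_range_X_sub_C_self, witnessConst]
    linarith
  · rw [hcoeff, hP, Polynomial.coeff_prod_range_succ_X_sub_C, sum_range_node,
      Polynomial.coeff_eq_zero_of_natDegree_lt (by simp)]
    simp

theorem diffOp_witnessForm {n : ℕ} (hn : 2 ≤ n) :
    diffOp (witnessForm n) (X 0 ^ (n + 1) * X 1 ^ 2) = 0 := by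
  refine diffOp_X_pow_mul_X_pow_eq_zero_iff.2 fun m hm => ?_
  have hdeg := (isHomogeneous_witnessForm n).apply_zero_add_apply_one hm
  by_contra! hle
  apply mem_support_iff.1 hm
  rw [← (isHomogeneous_witnessForm n).coeff_dehomogenize hdeg]
  exact coeff_dehomogenize_witnessForm_eq_zero hn (by omega) (by omega)

theorem arrank_eq {F : MvPolynomial (Fin 2) ℝ} {r : ℕ}
    (hmem : ∃ g, HasAlmostRealRoots r g ∧ diffOp g F = 0)
    (hmin : ∀ r' g, HasAlmostRealRoots r' g → diffOp g F = 0 → r ≤ r') : arrank F = r :=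
  le_antisymm (Nat.sInf_le hmem) (le_csInf ⟨r, hmem⟩ fun r' ⟨g, hg, hap⟩ => hmin r' g hg hap)

theorem stmt_15 {d : ℕ} (hd : 5 ≤ d) :
    arrank (X 0 ^ (d - 2) * X 1 ^ 2) = d - 1 := by
  obtain ⟨n, rfl⟩ := Nat.exists_eq_add_of_le' (by omega : 3 ≤ d)
  have hn : 2 ≤ n := by omega
  exact arrank_eq ⟨witnessForm n, hasAlmostRealRoots_witnessForm hn, diffOp_witnessForm hn⟩
    fun _ _ hg hap => lt_of_hasAlmostRealRoots_of_diffOp_eq_zero le_rfl hg hap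
end
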